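/- arXiv:2503.13910 — 9 statements merged into one kernel-verified Lean document; each statement's English description precedes it below -/
import Mathlib

section
/- Let κ > 0 and 0 < r < 1. Suppose V : [0, ∞) → ℝ is differentiable, V(t) ≥ 0 for all t ≥ 0, and V′(t) ≤ −κ V(t)^r for all t ≥ 0 with V(t) > 0. Then for every t ≥ 0, V(t) ≤ (max(V(0)^{1−r} − κ(1−r)t, 0))^{1/(1−r)}. -/
/-- If `V ≥ 0` on `[0,∞)`, differentiable, and `V' ≤ -κ V^r < 0` wherever `V > 0`,
then `V` cannot be positive at `t` if it vanished at some earlier time: positivity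
at `t` forces positivity on all of `[0,t]`. -/
lemma finite_time_decay_pos_on
    (κ r : ℝ) (hκ : 0 < κ)
    (V : ℝ → ℝ)
    (hVnn : ∀ t, 0 ≤ t → 0 ≤ V t)
    (hVdiff : ∀ t, 0 ≤ t → DifferentiableAt ℝ V t)
    (hineq : ∀ t, 0 ≤ t → 0 < V t → deriv V t ≤ -κ * V t ^ r) :
    ∀ t, 0 ≤ t → 0 < V t → ∀ s, 0 ≤ s → s ≤ t → 0 < V s := by
  intro t ht hVt s hs hst
  by_contra h
  push_neg at h
  have hVs : V s = 0 := le_antisymm h (hVnn s hs)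
  -- Z : zero set of V in [s,t]
  set Z : Set ℝ := Set.Icc s t ∩ V ⁻¹' {0} with hZ
  have hcontV : ContinuousOn V (Set.Icc s t) := fun x hx =>
    ((hVdiff x (le_trans hs hx.1)).continuousAt).continuousWithinAt
  have hZclosed : IsClosed Z :=
    hcontV.preimage_isClosed_of_isClosed isClosed_Icc isClosed_singleton
  have hZcompact : IsCompact Z :=
    isCompact_Icc.of_isClosed_subset hZclosed Set.inter_subset_left
  have hZne : Z.Nonempty := ⟨s, ⟨le_refl s, hst⟩, by simpa using hVs⟩
  set u := sSup Z with hu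
  have huZ : u ∈ Z := hZcompact.sSup_mem hZne
  have hVu : V u = 0 := by simpa using huZ.2
  have hus : s ≤ u := huZ.1.1
  have hut : u ≤ t := huZ.1.2
  have hult : u < t := lt_of_le_of_ne hut (fun h => by
    rw [h] at hVu; exact absurd hVu (ne_of_gt hVt))
  have hbdd : BddAbove Z := hZcompact.bddAbove
  -- On (u, t], V is positive
  have hpos : ∀ x, u < x → x ≤ t → 0 < V x := by
    intro x hux hxt
    have hx0 : 0 ≤ x := le_trans hs (le_trans hus (le_of_lt hux))
    rcases lt_or_eq_of_le (hVnn x hx0) with h' | h'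
    · exact h'
    · exfalso
      have : x ∈ Z := ⟨⟨le_trans hus (le_of_lt hux), hxt⟩, by simp [← h']⟩
      exact absurd (le_csSup hbdd this) (not_le.mpr hux)
  -- V is antitone on [u, t]
  have hanti : AntitoneOn V (Set.Icc u t) := by
    apply antitoneOn_of_deriv_nonpos (convex_Icc u t)
    · exact hcontV.mono (Set.Icc_subset_Icc hus (le_refl t))
    · intro x hx
      rw [interior_Icc] at hx
      exact (hVdiff x (le_trans hs (le_trans hus (le_of_lt hx.1)))).differentiableWithinAt
    · intro x hx
      rw [interior_Icc] at hx
      have hx0 : 0 ≤ x := le_trans hs (le_trans hus (le_of_lt hx.1))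
      have hVx : 0 < V x := hpos x hx.1 (le_of_lt hx.2)
      calc deriv V x ≤ -κ * V x ^ r := hineq x hx0 hVx
        _ ≤ 0 := by
            have := Real.rpow_pos_of_pos hVx r
            nlinarith
  have : V t ≤ V u := hanti ⟨le_refl u, hut⟩ ⟨hut, le_refl t⟩ hut
  rw [hVu] at this
  exact absurd this (not_le.mpr hVt)

/-- Quantitative decay for `V' ≤ -κ V^r`, `κ > 0`, `0 < r < 1`:
`V(t) ≤ (max(V(0)^{1-r} - κ(1-r)t, 0))^{1/(1-r)}` for all `t ≥ 0`. -/
theorem finite_time_decay_estimate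
    (κ r : ℝ) (hκ : 0 < κ) (hr0 : 0 < r) (hr1 : r < 1)
    (V : ℝ → ℝ)
    (hVnn : ∀ t, 0 ≤ t → 0 ≤ V t)
    (hVdiff : ∀ t, 0 ≤ t → DifferentiableAt ℝ V t)
    (hineq : ∀ t, 0 ≤ t → 0 < V t → deriv V t ≤ -κ * V t ^ r) :
    ∀ t, 0 ≤ t →
      V t ≤ (max (V 0 ^ (1 - r) - κ * (1 - r) * t) 0) ^ (1 / (1 - r)) := by
  intro t ht
  have h1r : (0:ℝ) < 1 - r := by linarith
  have hRHSnn : (0:ℝ) ≤ (max (V 0 ^ (1 - r) - κ * (1 - r) * t) 0) ^ (1 / (1 - r)) :=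
    Real.rpow_nonneg (le_max_right _ _) _
  rcases lt_or_eq_of_le (hVnn t ht) with hVt | hVt
  swap
  · rw [← hVt]; exact hRHSnn
  -- V > 0 on [0, t]
  have hpos : ∀ s, 0 ≤ s → s ≤ t → 0 < V s :=
    finite_time_decay_pos_on κ r hκ V hVnn hVdiff hineq t ht hVt
  -- g s = V s ^ (1-r) + κ(1-r) s is antitone on [0, t]
  set c := κ * (1 - r) with hc
  set g : ℝ → ℝ := fun s => V s ^ (1 - r) + c * s with hg
  have hganti : AntitoneOn g (Set.Icc 0 t) := by
    apply antitoneOn_of_deriv_nonpos (convex_Icc 0 t)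
    · apply ContinuousOn.add
      · exact ContinuousOn.rpow_const
          (fun x hx => ((hVdiff x hx.1).continuousAt).continuousWithinAt)
          (fun x hx => Or.inr (le_of_lt h1r))
      · exact (continuous_const.mul continuous_id).continuousOn
    · intro x hx
      rw [interior_Icc] at hx
      have hd : HasDerivAt g (deriv V x * (1 - r) * V x ^ (1 - r - 1) + c) x := by
        have h1 : HasDerivAt V (deriv V x) x := (hVdiff x (le_of_lt hx.1)).hasDerivAt
        have h2 := h1.rpow_const (p := 1 - r) (Or.inl (ne_of_gt (hpos x (le_of_lt hx.1) (le_of_lt hx.2))))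
        have h3 : HasDerivAt (fun s : ℝ => c * s) c x := by
          simpa using (hasDerivAt_id x).const_mul c
        exact h2.add h3
      exact hd.differentiableAt.differentiableWithinAt
    · intro x hx
      rw [interior_Icc] at hx
      have hx0 : 0 ≤ x := le_of_lt hx.1
      have hVx : 0 < V x := hpos x hx0 (le_of_lt hx.2)
      have h1 : HasDerivAt V (deriv V x) x := (hVdiff x hx0).hasDerivAt
      have h2 := h1.rpow_const (p := 1 - r) (Or.inl (ne_of_gt hVx))
      have h3 : HasDerivAt (fun s : ℝ => c * s) c x := by
        simpa using (hasDerivAt_id x).const_mul c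
      have hd : HasDerivAt g (deriv V x * (1 - r) * V x ^ (1 - r - 1) + c) x := h2.add h3
      rw [hd.deriv]
      -- key estimate
      have hVr : deriv V x ≤ -κ * V x ^ r := hineq x hx0 hVx
      have hexp : V x ^ (1 - r - 1) = V x ^ (-r) := by norm_num
      have hprod : V x ^ r * V x ^ (-r) = 1 := by
        rw [← Real.rpow_add hVx]; norm_num
      have hpow_pos : 0 < V x ^ (1 - r - 1) := by
        rw [hexp]; exact Real.rpow_pos_of_pos hVx _
      have : deriv V x * (1 - r) * V x ^ (1 - r - 1)
          ≤ (-κ * V x ^ r) * (1 - r) * V x ^ (1 - r - 1) := by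
        have h1r' : (0:ℝ) < (1 - r) * V x ^ (1 - r - 1) := mul_pos h1r hpow_pos
        calc deriv V x * (1 - r) * V x ^ (1 - r - 1)
            = deriv V x * ((1 - r) * V x ^ (1 - r - 1)) := by ring
          _ ≤ (-κ * V x ^ r) * ((1 - r) * V x ^ (1 - r - 1)) :=
              mul_le_mul_of_nonneg_right hVr (le_of_lt h1r')
          _ = (-κ * V x ^ r) * (1 - r) * V x ^ (1 - r - 1) := by ring
      have heq : (-κ * V x ^ r) * (1 - r) * V x ^ (1 - r - 1) = -c := by
        rw [hexp, hc]
        have : -κ * V x ^ r * (1 - r) * V x ^ (-r)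
            = -(κ * (1 - r)) * (V x ^ r * V x ^ (-r)) := by ring
        rw [this, hprod]; ring
      linarith [this, heq ▸ this]
  -- conclude
  have hgt : g t ≤ g 0 := hganti ⟨le_refl 0, ht⟩ ⟨ht, le_refl t⟩ ht
  have hWt : V t ^ (1 - r) ≤ max (V 0 ^ (1 - r) - c * t) 0 := by
    have : V t ^ (1 - r) + c * t ≤ V 0 ^ (1 - r) + c * 0 := hgt
    have h' : V t ^ (1 - r) ≤ V 0 ^ (1 - r) - c * t := by linarith
    exact le_max_of_le_left h'
  have hkey : V t = (V t ^ (1 - r)) ^ (1 / (1 - r)) := by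
    rw [one_div, Real.rpow_rpow_inv (le_of_lt hVt) (ne_of_gt h1r)]
  rw [hkey]
  exact Real.rpow_le_rpow (Real.rpow_nonneg (le_of_lt hVt) _) hWt
    (by positivity)
end

section
/- Let t₀ ∈ ℝ, T > 0, r a positive integer, and define 𝒯(t) = (T/(T + t₀ − t))^r for t ∈ [t₀, t₀ + T). Let ρ > 0 and let V : [t₀, t₀ + T) → ℝ be differentiable with V(t) ≥ 0 and V′(t) ≤ −2ρ 𝒯(t) V(t) for all t ∈ [t₀, t₀ + T). Then V(t) ≤ exp(−2ρ ∫_{t₀}^{t} 𝒯(τ) dτ) · V(t₀) for all t ∈ [t₀, t₀ + T), and V(t) → 0 as t → (t₀ + T)⁻. -/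
/-- The time-scaling function `𝒯(t) = (T_p / (T_p + t₀ - t))^r`. -/
noncomputable def Tscale (t₀ Tp : ℝ) (r : ℕ) (t : ℝ) : ℝ := (Tp / (Tp + t₀ - t)) ^ r

/-- disturbance-free case of Lemma 3: `V' ≤ -2ρ𝒯V` forces
`V(t) ≤ exp(-2ρ∫𝒯) V(t₀)` and `V(t) → 0` as `t → (t₀ + T)⁻`. -/
theorem gronwall_time_varying_gain_disturbance_free
    (t₀ Tp : ℝ) (hTp : 0 < Tp) (r : ℕ) (hr : 0 < r)
    (ρ : ℝ) (hρ : 0 < ρ)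
    (V : ℝ → ℝ)
    (hVnn : ∀ t ∈ Set.Ico t₀ (t₀ + Tp), 0 ≤ V t)
    (hVdiff : ∀ t ∈ Set.Ico t₀ (t₀ + Tp), DifferentiableAt ℝ V t)
    (hineq : ∀ t ∈ Set.Ico t₀ (t₀ + Tp),
      deriv V t ≤ -2 * ρ * Tscale t₀ Tp r t * V t) :
    (∀ t ∈ Set.Ico t₀ (t₀ + Tp),
      V t ≤ Real.exp (-2 * ρ * ∫ τ in t₀..t, Tscale t₀ Tp r τ) * V t₀) ∧
    Filter.Tendsto V (nhdsWithin (t₀ + Tp) (Set.Iio (t₀ + Tp))) (nhds 0) := by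
  set c := t₀ + Tp with hcdef
  set f := Tscale t₀ Tp r with hfdef
  have ht₀c : t₀ < c := by rw [hcdef]; linarith
  have hcont : ContinuousOn f (Set.Iio c) := by
    apply ContinuousOn.pow
    apply ContinuousOn.div continuousOn_const (by fun_prop)
    intro x hx
    simp only [Set.mem_Iio, hcdef] at hx
    intro h; linarith
  have hsub : ∀ a b : ℝ, a ∈ Set.Iio c → b ∈ Set.Iio c → Set.uIcc a b ⊆ Set.Iio c := by
    intro a b ha hb x hx
    rw [Set.mem_uIcc] at hx
    simp only [Set.mem_Iio] at *
    rcases hx with ⟨_, h⟩ | ⟨_, h⟩ <;> linarith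
  have hint : ∀ a b : ℝ, a ∈ Set.Iio c → b ∈ Set.Iio c →
      IntervalIntegrable f MeasureTheory.volume a b := fun a b ha hb =>
    (hcont.mono (hsub a b ha hb)).intervalIntegrable
  set F : ℝ → ℝ := fun t => ∫ τ in t₀..t, f τ with hFdef
  have hF : ∀ t ∈ Set.Iio c, HasDerivAt F (f t) t := by
    intro t ht
    exact intervalIntegral.integral_hasDerivAt_right (hint t₀ t (Set.mem_Iio.mpr ht₀c) ht)
      (hcont.stronglyMeasurableAtFilter isOpen_Iio t ht)
      (hcont.continuousAt (isOpen_Iio.mem_nhds ht))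
  set g : ℝ → ℝ := fun t => Real.exp (2 * ρ * F t) * V t with hgdef
  have hIcosub : Set.Ico t₀ c ⊆ Set.Iio c := Set.Ico_subset_Iio_self
  have hganti : AntitoneOn g (Set.Ico t₀ c) := by
    apply antitoneOn_of_deriv_nonpos (convex_Ico t₀ c)
    · apply ContinuousOn.mul
      · exact (Real.continuous_exp.comp_continuousOn
          (continuousOn_const.mul (fun t ht => ((hF t (hIcosub ht)).continuousAt.continuousWithinAt))))
      · exact fun t ht => (hVdiff t ht).continuousAt.continuousWithinAt
    · rw [interior_Ico]
      intro x hx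
      have hx' : x ∈ Set.Ico t₀ c := Set.Ioo_subset_Ico_self hx
      exact ((((hF x (hIcosub hx')).const_mul (2*ρ)).exp.mul
        ((hVdiff x hx').hasDerivAt)).differentiableAt).differentiableWithinAt
    · rw [interior_Ico]
      intro x hx
      have hx' : x ∈ Set.Ico t₀ c := Set.Ioo_subset_Ico_self hx
      have hd : HasDerivAt g
          (Real.exp (2*ρ*F x) * (2*ρ*f x) * V x + Real.exp (2*ρ*F x) * deriv V x) x :=
        (((hF x (hIcosub hx')).const_mul (2*ρ)).exp.mul ((hVdiff x hx').hasDerivAt))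
      rw [hd.deriv]
      have h1 := hineq x hx'
      have hE : (0:ℝ) < Real.exp (2*ρ*F x) := Real.exp_pos _
      nlinarith [mul_le_mul_of_nonneg_left h1 hE.le]
  have hF0 : F t₀ = 0 := by simp [hFdef]
  have key : ∀ t ∈ Set.Ico t₀ c, V t ≤ Real.exp (-2 * ρ * F t) * V t₀ := by
    intro t ht
    have hg : g t ≤ g t₀ := hganti (Set.left_mem_Ico.mpr ht₀c) ht ht.1
    have hgt₀ : g t₀ = V t₀ := by simp [hgdef, hF0]
    have hVt : V t = Real.exp (-2 * ρ * F t) * g t := by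
      rw [hgdef]
      simp only []
      rw [← mul_assoc, ← Real.exp_add, show -2*ρ*F t + 2*ρ*F t = 0 by ring,
        Real.exp_zero, one_mul]
    rw [hVt, ← hgt₀]
    exact mul_le_mul_of_nonneg_left hg (Real.exp_pos _).le
  refine ⟨key, ?_⟩
  -- lower bound for F
  have hlog : ∀ t ∈ Set.Ico t₀ c, Tp * (Real.log Tp - Real.log (c - t)) ≤ F t := by
    intro t ht
    have htc : t < c := ht.2
    have hct : 0 < c - t := by linarith
    have hmono : ∀ τ ∈ Set.Icc t₀ t, Tp / (c - τ) ≤ f τ := by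
      intro τ hτ
      have h1 : 0 < c - τ := by have := hτ.2; linarith
      have h2 : c - τ ≤ Tp := by rw [hcdef]; linarith [hτ.1]
      have hb : 1 ≤ Tp / (c - τ) := (one_le_div h1).mpr h2
      calc Tp / (c - τ) ≤ (Tp / (c - τ)) ^ r := le_self_pow₀ hb hr.ne'
        _ = f τ := by rw [hfdef, Tscale]; congr 2; rw [hcdef]; ring
    have hcont2 : ContinuousOn (fun τ => Tp / (c - τ)) (Set.Iio c) := by
      apply ContinuousOn.div continuousOn_const (by fun_prop)
      intro x hx
      simp only [Set.mem_Iio] at hx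
      intro h; linarith
    have hint2 : IntervalIntegrable (fun τ => Tp / (c - τ)) MeasureTheory.volume t₀ t :=
      (hcont2.mono (hsub t₀ t (Set.mem_Iio.mpr ht₀c) (Set.mem_Iio.mpr htc))).intervalIntegrable
    have hle : (∫ τ in t₀..t, Tp / (c - τ)) ≤ F t :=
      intervalIntegral.integral_mono_on ht.1 hint2
        (hint t₀ t (Set.mem_Iio.mpr ht₀c) (Set.mem_Iio.mpr htc)) hmono
    have hval : (∫ τ in t₀..t, Tp / (c - τ)) = Tp * (Real.log Tp - Real.log (c - t)) := by
      have h0 : (∫ τ in t₀..t, Tp / (c - τ)) = Tp * ∫ τ in t₀..t, 1 / (c - τ) := by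
        rw [← intervalIntegral.integral_const_mul]
        congr 1; ext τ; ring
      rw [h0]
      have hcomp : (∫ τ in t₀..t, (fun x => 1 / x) (c - τ)) = ∫ x in (c - t)..(c - t₀), 1 / x :=
        intervalIntegral.integral_comp_sub_left (fun x => 1 / x) c
      simp only at hcomp
      rw [hcomp, integral_one_div]
      · rw [show c - t₀ = Tp by rw [hcdef]; ring, Real.log_div hTp.ne' hct.ne']
      · intro h
        rw [Set.mem_uIcc] at h
        have hTp' : (0:ℝ) < c - t₀ := by rw [hcdef]; linarith
        rcases h with ⟨h1, _⟩ | ⟨h1, _⟩ <;> linarith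
    rw [hval] at hle; exact hle
  -- F tends to atTop
  have hsub0 : Filter.Tendsto (fun t => c - t) (nhdsWithin c (Set.Iio c))
      (nhdsWithin 0 (Set.Ioi 0)) := by
    apply tendsto_nhdsWithin_of_tendsto_nhds_of_eventually_within
    · have h1 : Filter.Tendsto (fun t : ℝ => c - t) (nhds c) (nhds (c - c)) :=
        (tendsto_const_nhds.sub Filter.tendsto_id)
      simpa using h1.mono_left nhdsWithin_le_nhds
    · filter_upwards [self_mem_nhdsWithin] with t ht
      simp only [Set.mem_Iio] at ht
      simp only [Set.mem_Ioi]; linarith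
  have hlogb : Filter.Tendsto (fun t => Real.log (c - t)) (nhdsWithin c (Set.Iio c))
      Filter.atBot := Real.tendsto_log_nhdsGT_zero.comp hsub0
  have hlow : Filter.Tendsto (fun t => Tp * (Real.log Tp - Real.log (c - t)))
      (nhdsWithin c (Set.Iio c)) Filter.atTop := by
    apply Filter.Tendsto.const_mul_atTop hTp
    have hneg : Filter.Tendsto (fun t => -Real.log (c - t)) (nhdsWithin c (Set.Iio c))
        Filter.atTop := Filter.tendsto_neg_atBot_atTop.comp hlogb
    have := Filter.tendsto_atTop_add_const_left (nhdsWithin c (Set.Iio c)) (Real.log Tp) hneg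
    simpa [sub_eq_add_neg] using this
  have hFtop : Filter.Tendsto F (nhdsWithin c (Set.Iio c)) Filter.atTop := by
    apply Filter.tendsto_atTop_mono' _ _ hlow
    filter_upwards [Ioo_mem_nhdsLT_of_mem (Set.mem_Ioc.mpr ⟨ht₀c, le_refl c⟩)] with t ht
    exact hlog t (Set.Ioo_subset_Ico_self ht)
  -- the bound tends to 0
  have hbot : Filter.Tendsto (fun t => -2 * ρ * F t) (nhdsWithin c (Set.Iio c)) Filter.atBot := by
    have h2 : Filter.Tendsto (fun t => (2*ρ) * F t) (nhdsWithin c (Set.Iio c)) Filter.atTop :=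
      Filter.Tendsto.const_mul_atTop (by linarith) hFtop
    have := Filter.tendsto_neg_atTop_atBot.comp h2
    have heq : (fun t => -2 * ρ * F t) = (fun t => -((2*ρ) * F t)) := by ext t; ring
    rw [heq]; exact this
  have hB : Filter.Tendsto (fun t => Real.exp (-2 * ρ * F t) * V t₀)
      (nhdsWithin c (Set.Iio c)) (nhds 0) := by
    have := (Real.tendsto_exp_atBot.comp hbot).mul_const (V t₀)
    simpa using this
  apply squeeze_zero' ?_ ?_ hB
  · filter_upwards [Ioo_mem_nhdsLT_of_mem (Set.mem_Ioc.mpr ⟨ht₀c, le_refl c⟩)] with t ht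
    exact hVnn t (Set.Ioo_subset_Ico_self ht)
  · filter_upwards [Ioo_mem_nhdsLT_of_mem (Set.mem_Ioc.mpr ⟨ht₀c, le_refl c⟩)] with t ht
    exact key t (Set.Ioo_subset_Ico_self ht)
end

section
/- Let t₀ ∈ ℝ, T_p > 0, r a positive integer, 𝒯(t) = (T_p/(T_p + t₀ − t))^r on [t₀, t₀ + T_p), and ρ > 0. Suppose x : [t₀, t₀ + T_p) → ℝ is differentiable and satisfies ẋ(t) = −ρ 𝒯(t) x(t) for all t ∈ [t₀, t₀ + T_p). Then x(t) = x(t₀) · exp(−ρ ∫_{t₀}^{t} 𝒯(τ) dτ) for all t ∈ [t₀, t₀ + T_p), and consequently x(t) → 0 as t → (t₀ + T_p)⁻. -/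
open Set Filter Real intervalIntegral Topology

theorem eq_mul_exp_neg_integral_of_hasDerivAt {k x : ℝ → ℝ} {a b t : ℝ}
    (hk : ContinuousOn k (Iio b)) (hx : ∀ s ∈ Ico a b, HasDerivAt x (-k s * x s) s)
    (ht : t ∈ Ico a b) : x t = x a * exp (-∫ τ in a..t, k τ) := by
  set K : ℝ → ℝ := fun u => ∫ τ in a..u, k τ
  have hK : ∀ s ∈ Ico a b, HasDerivAt K (k s) s := fun s hs =>
    integral_hasDerivAt_right
      (ContinuousOn.intervalIntegrable <| hk.mono <| by
        rw [uIcc_of_le hs.1]; exact fun τ hτ => hτ.2.trans_lt hs.2)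
      (hk.stronglyMeasurableAtFilter isOpen_Iio s hs.2) (hk.continuousAt (Iio_mem_nhds hs.2))
  have hF : ∀ s ∈ Ico a b, HasDerivAt (fun u => x u * exp (K u)) 0 s := fun s hs =>
    ((hx s hs).mul (hK s hs).exp).congr_deriv (by ring)
  have hIcc : Icc a t ⊆ Ico a b := fun s hs => ⟨hs.1, hs.2.trans_lt ht.2⟩
  have hconst := constant_of_has_deriv_right_zero
    (fun s hs => (hF s (hIcc hs)).continuousAt.continuousWithinAt)
    (fun s hs => (hF s (hIcc (Ico_subset_Icc_self hs))).hasDerivWithinAt) t ⟨ht.1, le_rfl⟩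
  simp only [K, integral_same, exp_zero, mul_one] at hconst
  rw [exp_neg, ← hconst, mul_inv_cancel_right₀ (exp_pos _).ne']

theorem integral_div_sub_eq_mul_log (c : ℝ) {a b t : ℝ} (hat : a ≤ t) (htb : t < b) :
    ∫ τ in a..t, c / (b - τ) = c * log ((b - a) / (b - t)) := by
  simp_rw [div_eq_mul_inv c, integral_const_mul, integral_comp_sub_left (fun u => u⁻¹) b]
  rw [integral_inv_of_pos (by linarith) (by linarith)]

theorem tendsto_div_sub_nhdsLT_atTop {b c : ℝ} (hc : 0 < c) :
    Tendsto (fun t => c / (b - t)) (𝓝[<] b) atTop := by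
  have hsub : Tendsto (fun t => b - t) (𝓝[<] b) (𝓝[>] 0) := by
    refine tendsto_nhdsWithin_iff.2
      ⟨?_, eventually_nhdsWithin_of_forall fun t ht => mem_Ioi.2 (sub_pos.2 ht)⟩
    simpa using ((continuous_sub_left b).tendsto b).mono_left nhdsWithin_le_nhds
  simpa only [div_eq_mul_inv, Function.comp_def] using
    (tendsto_inv_nhdsGT_zero.comp hsub).const_mul_atTop hc

section Tscale

variable {t₀ Tp : ℝ} {r : ℕ}

theorem continuousOn_Tscale : ContinuousOn (Tscale t₀ Tp r) (Iio (t₀ + Tp)) := fun t ht =>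
  have hne : Tp + t₀ - t ≠ 0 := by rw [mem_Iio] at ht; linarith
  ((continuousAt_const.div (by fun_prop) hne).pow r).continuousWithinAt

theorem div_sub_le_Tscale (hr : 0 < r) {t : ℝ} (ht : t ∈ Ico t₀ (t₀ + Tp)) :
    Tp / (t₀ + Tp - t) ≤ Tscale t₀ Tp r t := by
  have hpos : 0 < t₀ + Tp - t := sub_pos.2 ht.2
  have hone : 1 ≤ Tp / (t₀ + Tp - t) := by rw [le_div_iff₀ hpos]; linarith [ht.1]
  rw [Tscale, add_comm Tp t₀]
  exact le_self_pow₀ hone hr.ne'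

theorem tendsto_integral_Tscale_atTop (hTp : 0 < Tp) (hr : 0 < r) :
    Tendsto (fun t => ∫ τ in t₀..t, Tscale t₀ Tp r τ) (𝓝[<] (t₀ + Tp)) atTop := by
  have hlog : Tendsto (fun t => Tp * log (Tp / (t₀ + Tp - t))) (𝓝[<] (t₀ + Tp)) atTop :=
    (tendsto_log_atTop.comp (tendsto_div_sub_nhdsLT_atTop hTp)).const_mul_atTop hTp
  refine tendsto_atTop_mono' _ ?_ hlog
  filter_upwards [Ioo_mem_nhdsLT (by linarith : t₀ < t₀ + Tp)] with t ht
  have hIcc : Icc t₀ t ⊆ Ico t₀ (t₀ + Tp) := fun s hs => ⟨hs.1, hs.2.trans_lt ht.2⟩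
  have hsub : uIcc t₀ t ⊆ Iio (t₀ + Tp) := by
    rw [uIcc_of_le ht.1.le]; exact fun s hs => (hIcc hs).2
  calc Tp * log (Tp / (t₀ + Tp - t)) = ∫ τ in t₀..t, Tp / (t₀ + Tp - τ) := by
        rw [integral_div_sub_eq_mul_log Tp ht.1.le ht.2, add_sub_cancel_left]
    _ ≤ ∫ τ in t₀..t, Tscale t₀ Tp r τ :=
        integral_mono_on ht.1.le
          ((continuousOn_const.div (by fun_prop) fun s hs =>
            (sub_pos.2 (hsub hs)).ne').intervalIntegrable)
          ((continuousOn_Tscale.mono hsub).intervalIntegrable)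
          fun s hs => div_sub_le_Tscale hr (hIcc hs)

end Tscale

/-- prescribed-time regulation of the single integrator
`ẋ = -ρ 𝒯(t) x`: `x(t) = x(t₀) exp(-ρ∫𝒯)` and `x(t) → 0` as `t → (t₀+T_p)⁻`. -/
theorem single_integrator_prescribed_time
    (t₀ Tp : ℝ) (hTp : 0 < Tp) (r : ℕ) (hr : 0 < r)
    (ρ : ℝ) (hρ : 0 < ρ)
    (x : ℝ → ℝ)
    (hx : ∀ t ∈ Set.Ico t₀ (t₀ + Tp),
      HasDerivAt x (-(ρ * Tscale t₀ Tp r t) * x t) t) :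
    (∀ t ∈ Set.Ico t₀ (t₀ + Tp),
      x t = x t₀ * Real.exp (-ρ * ∫ τ in t₀..t, Tscale t₀ Tp r τ)) ∧
    Filter.Tendsto x (nhdsWithin (t₀ + Tp) (Set.Iio (t₀ + Tp))) (nhds 0) := by
  have hsol : ∀ t ∈ Ico t₀ (t₀ + Tp),
      x t = x t₀ * exp (-ρ * ∫ τ in t₀..t, Tscale t₀ Tp r τ) := fun t ht => by
    rw [neg_mul, ← integral_const_mul]
    exact eq_mul_exp_neg_integral_of_hasDerivAt
      (continuousOn_const.mul continuousOn_Tscale) hx ht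
  refine ⟨hsol, ?_⟩
  have hdecay : Tendsto (fun t => x t₀ * exp (-ρ * ∫ τ in t₀..t, Tscale t₀ Tp r τ))
      (𝓝[<] (t₀ + Tp)) (𝓝 0) := by
    have hexponent := (tendsto_integral_Tscale_atTop (t₀ := t₀) hTp hr).const_mul_atTop_of_neg
      (neg_neg_of_pos hρ)
    simpa using (tendsto_exp_atBot.comp hexponent).const_mul (x t₀)
  refine hdecay.congr' ?_
  filter_upwards [Ioo_mem_nhdsLT (by linarith : t₀ < t₀ + Tp)] with t ht
  exact (hsol t (Ioo_subset_Ico_self ht)).symm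
end

section
/- Let t₀ ∈ ℝ, T_p > 0, r a positive integer, 𝒯(t) = (T_p/(T_p + t₀ − t))^r on [t₀, t₀ + T_p), ρ₀ > 0, and ρ = ρ₀ + r/T_p. Suppose x : [t₀, t₀ + T_p) → ℝ is differentiable with ẋ(t) = −ρ 𝒯(t) x(t), and define the transformed variable h(t) = 𝒯(t) x(t) and V(t) = (1/2) h(t)². Then V is differentiable and V′(t) ≤ −2ρ₀ 𝒯(t) V(t) for all t ∈ [t₀, t₀ + T_p). -/
lemma natCast_mul_le_natCast_mul_pow {q : ℝ} (hq : 1 ≤ q) (r : ℕ) : (r : ℝ) * q ≤ r * q ^ r := by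
  rcases Nat.eq_zero_or_pos r with rfl | hr
  · simp
  · exact mul_le_mul_of_nonneg_left (le_self_pow₀ hq hr.ne') r.cast_nonneg

lemma HasDerivAt.half_sq {h : ℝ → ℝ} {c t : ℝ} (hh : HasDerivAt h (c * h t) t) :
    HasDerivAt (fun s => (1 / 2) * h s ^ 2) (2 * c * ((1 / 2) * h t ^ 2)) t := by
  refine ((hh.pow 2).const_mul (1 / 2)).congr_deriv ?_
  push_cast
  ring

namespace Tscale

variable {t₀ Tp : ℝ} {r : ℕ} {t : ℝ}

lemma hasDerivAt (ht : Tp + t₀ - t ≠ 0) :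
    HasDerivAt (Tscale t₀ Tp r) (r / (Tp + t₀ - t) * Tscale t₀ Tp r t) t := by
  have hinner : HasDerivAt (fun s => Tp / (Tp + t₀ - s)) (Tp / (Tp + t₀ - t) ^ 2) t :=
    ((hasDerivAt_const t Tp).fun_div ((hasDerivAt_id' t).const_sub (Tp + t₀)) ht).congr_deriv
      (by ring)
  refine (hinner.fun_pow r).congr_deriv ?_
  cases r with
  | zero => simp
  | succ n =>
    rw [Tscale, Nat.add_sub_cancel, pow_succ _ n]
    field_simp

/-- The paper's bound `𝒯' ≤ (r / T_p) 𝒯²`, divided by `𝒯 > 0`. -/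
lemma logDeriv_le (ht : t ∈ Set.Ico t₀ (t₀ + Tp)) :
    (r : ℝ) / (Tp + t₀ - t) ≤ r / Tp * Tscale t₀ Tp r t := by
  obtain ⟨ht₀, ht₁⟩ := ht
  have hu : 0 < Tp + t₀ - t := by linarith
  have hq : 1 ≤ Tp / (Tp + t₀ - t) := (one_le_div hu).mpr (by linarith)
  calc (r : ℝ) / (Tp + t₀ - t) = (r * (Tp / (Tp + t₀ - t))) / Tp := by
        field_simp [show Tp ≠ 0 by linarith]
    _ ≤ (r * (Tp / (Tp + t₀ - t)) ^ r) / Tp :=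
        div_le_div_of_nonneg_right (natCast_mul_le_natCast_mul_pow hq r) (by linarith)
    _ = r / Tp * Tscale t₀ Tp r t := by rw [Tscale]; ring

end Tscale

theorem single_integrator_lyapunov_inequality_general
    (t₀ Tp : ℝ) (r : ℕ)
    (ρ₀ ρ : ℝ) (hρ : ρ = ρ₀ + (r : ℝ) / Tp)
    (x : ℝ → ℝ)
    (hx : ∀ t ∈ Set.Ico t₀ (t₀ + Tp),
      HasDerivAt x (-(ρ * Tscale t₀ Tp r t) * x t) t) :
    ∀ t ∈ Set.Ico t₀ (t₀ + Tp),
      DifferentiableAt ℝ (fun s => (1 / 2) * (Tscale t₀ Tp r s * x s) ^ 2) t ∧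
      deriv (fun s => (1 / 2) * (Tscale t₀ Tp r s * x s) ^ 2) t
        ≤ -2 * ρ₀ * Tscale t₀ Tp r t
            * ((1 / 2) * (Tscale t₀ Tp r t * x t) ^ 2) := by
  intro t ht
  have hu : Tp + t₀ - t ≠ 0 := by linarith [ht.2]
  have hh : HasDerivAt (fun s => Tscale t₀ Tp r s * x s)
      ((r / (Tp + t₀ - t) - ρ * Tscale t₀ Tp r t) * (Tscale t₀ Tp r t * x t)) t := by
    refine ((Tscale.hasDerivAt hu).mul (hx t ht)).congr_deriv ?_
    ring
  have hV := hh.half_sq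
  refine ⟨hV.differentiableAt, hV.deriv ▸ mul_le_mul_of_nonneg_right ?_ (by positivity)⟩
  rw [hρ]
  linarith [Tscale.logDeriv_le (r := r) ht]

/-- with the gain `ρ = ρ₀ + r/T_p`, the transformed Lyapunov
function `V(t) = ½(𝒯(t)x(t))²` satisfies `V'(t) ≤ -2ρ₀ 𝒯(t) V(t)`. -/
theorem single_integrator_lyapunov_inequality
    (t₀ Tp : ℝ) (hTp : 0 < Tp) (r : ℕ) (hr : 0 < r)
    (ρ₀ ρ : ℝ) (hρ₀ : 0 < ρ₀) (hρ : ρ = ρ₀ + (r : ℝ) / Tp)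
    (x : ℝ → ℝ)
    (hx : ∀ t ∈ Set.Ico t₀ (t₀ + Tp),
      HasDerivAt x (-(ρ * Tscale t₀ Tp r t) * x t) t) :
    ∀ t ∈ Set.Ico t₀ (t₀ + Tp),
      DifferentiableAt ℝ (fun s => (1 / 2) * (Tscale t₀ Tp r s * x s) ^ 2) t ∧
      deriv (fun s => (1 / 2) * (Tscale t₀ Tp r s * x s) ^ 2) t
        ≤ -2 * ρ₀ * Tscale t₀ Tp r t
            * ((1 / 2) * (Tscale t₀ Tp r t * x t) ^ 2) :=
  single_integrator_lyapunov_inequality_general t₀ Tp r ρ₀ ρ hρ x hx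
end

section
/- Let f : ℝⁿ → ℝ be differentiable, attaining its global minimum value f* = f(x*), and satisfying the Polyak–Łojasiewicz inequality f(y) − f* ≤ (1/(2σ))‖∇f(y)‖² for all y ∈ ℝⁿ, with σ > 0. Let t₀ ∈ ℝ, T_p > 0, r a positive integer, 𝒯(t) = (T_p/(T_p + t₀ − t))^r on [t₀, t₀ + T_p), and k > 0. Suppose x : [t₀, t₀ + T_p) → ℝⁿ is differentiable with ẋ(t) = −k 𝒯(t) ∇f(x(t)). Then for every t ∈ [t₀, t₀ + T_p), f(x(t)) − f* ≤ exp(−2σ k ∫_{t₀}^{t} 𝒯(τ) dτ) · (f(x(t₀)) − f*). -/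
/-- exponential-in-`∫𝒯` suboptimality bound for the
time-varying-feedback gradient flow of a PŁ function:
`f(x(t)) - f* ≤ exp(-2σk∫_{t₀}^{t}𝒯) (f(x(t₀)) - f*)`. -/
theorem pl_gradient_flow_suboptimality_bound
    (n : ℕ) (f : EuclideanSpace ℝ (Fin n) → ℝ) (hf : Differentiable ℝ f)
    (xstar : EuclideanSpace ℝ (Fin n)) (hmin : ∀ y, f xstar ≤ f y)
    (σ : ℝ) (hσ : 0 < σ)
    (hPL : ∀ y, f y - f xstar ≤ 1 / (2 * σ) * ‖gradient f y‖ ^ 2)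
    (t₀ Tp : ℝ) (hTp : 0 < Tp) (r : ℕ) (hr : 0 < r) (k : ℝ) (hk : 0 < k)
    (x : ℝ → EuclideanSpace ℝ (Fin n))
    (hx : ∀ t ∈ Set.Ico t₀ (t₀ + Tp),
      HasDerivAt x (-(k * Tscale t₀ Tp r t) • gradient f (x t)) t) :
    ∀ t ∈ Set.Ico t₀ (t₀ + Tp),
      f (x t) - f xstar
        ≤ Real.exp (-2 * σ * k * ∫ τ in t₀..t, Tscale t₀ Tp r τ)
            * (f (x t₀) - f xstar) := by
  intro t ht
  obtain ⟨ht0, htTp⟩ := ht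
  -- continuity of the time-scaling function on `[t₀, t]`
  have hsub : Set.Icc t₀ t ⊆ Set.Ico t₀ (t₀ + Tp) := fun s hs =>
    ⟨hs.1, lt_of_le_of_lt hs.2 htTp⟩
  have hTcont : ContinuousOn (Tscale t₀ Tp r) (Set.Icc t₀ t) := by
    apply ContinuousOn.pow
    apply ContinuousOn.div continuousOn_const (by fun_prop)
    intro s hs
    have : s < t₀ + Tp := lt_of_le_of_lt hs.2 htTp
    intro h; rw [sub_eq_zero] at h; linarith
  have hint : IntervalIntegrable (Tscale t₀ Tp r) MeasureTheory.volume t₀ t := by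
    apply ContinuousOn.intervalIntegrable
    rwa [Set.uIcc_of_le ht0]
  set I : ℝ → ℝ := fun s => ∫ τ in t₀..s, Tscale t₀ Tp r τ with hIdef
  have hIcont : ContinuousOn I (Set.Icc t₀ t) := by
    have := intervalIntegral.continuousOn_primitive_interval' hint
      (Set.left_mem_uIcc (a := t₀) (b := t))
    rwa [Set.uIcc_of_le ht0] at this
  -- the auxiliary "energy" function
  set g : ℝ → ℝ := fun s => Real.exp (2 * σ * k * I s) * (f (x s) - f xstar) with hgdef
  -- derivative of g at interior points
  have hG : ∀ s ∈ Set.Ioo t₀ t,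
      HasDerivAt g
        (Real.exp (2 * σ * k * I s) * (2 * σ * k * Tscale t₀ Tp r s) * (f (x s) - f xstar)
          + Real.exp (2 * σ * k * I s)
            * (-(k * Tscale t₀ Tp r s) * ‖gradient f (x s)‖ ^ 2)) s := by
    intro s hs
    have hs' : s ∈ Set.Ico t₀ (t₀ + Tp) := hsub ⟨le_of_lt hs.1, le_of_lt hs.2⟩
    -- derivative of I at s
    have hint' : IntervalIntegrable (Tscale t₀ Tp r) MeasureTheory.volume t₀ s := by
      apply ContinuousOn.intervalIntegrable
      apply hTcont.mono
      rw [Set.uIcc_of_le (le_of_lt hs.1)]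
      exact Set.Icc_subset_Icc le_rfl (le_of_lt hs.2)
    have hTca : ContinuousAt (Tscale t₀ Tp r) s := by
      apply ContinuousAt.pow
      apply ContinuousAt.div continuousAt_const (by fun_prop)
      intro h; rw [sub_eq_zero] at h; have := hs'.2; linarith
    have hmeas : StronglyMeasurableAtFilter (Tscale t₀ Tp r) (nhds s) :=
      ((measurable_const.div (by fun_prop)).pow_const r).stronglyMeasurable.stronglyMeasurableAtFilter
    have hDI : HasDerivAt I (Tscale t₀ Tp r s) s :=
      intervalIntegral.integral_hasDerivAt_right hint' hmeas hTca
    have hExp : HasDerivAt (fun u => Real.exp (2 * σ * k * I u))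
        (Real.exp (2 * σ * k * I s) * (2 * σ * k * Tscale t₀ Tp r s)) s :=
      (hDI.const_mul (2 * σ * k)).exp
    -- derivative of f ∘ x
    have hgrad : HasGradientAt f (gradient f (x s)) (x s) :=
      (hf (x s)).hasGradientAt
    have hVf : HasDerivAt (fun u => f (x u))
        ((InnerProductSpace.toDual ℝ _ (gradient f (x s)))
          (-(k * Tscale t₀ Tp r s) • gradient f (x s))) s :=
      (hgrad.hasFDerivAt).comp_hasDerivAt s (hx s hs')
    have hV : HasDerivAt (fun u => f (x u) - f xstar)
        (-(k * Tscale t₀ Tp r s) * ‖gradient f (x s)‖ ^ 2) s := by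
      have : (InnerProductSpace.toDual ℝ _ (gradient f (x s)))
          (-(k * Tscale t₀ Tp r s) • gradient f (x s))
          = -(k * Tscale t₀ Tp r s) * ‖gradient f (x s)‖ ^ 2 := by
        rw [InnerProductSpace.toDual_apply_apply, real_inner_smul_right,
          real_inner_self_eq_norm_sq]
      rw [this] at hVf
      exact hVf.sub_const (f xstar)
    exact hExp.mul hV
  -- g is antitone on [t₀, t]
  have hxcont : ContinuousOn (fun u => f (x u) - f xstar) (Set.Icc t₀ t) := by
    intro s hs
    exact (((hf (x s)).continuousAt.comp (hx s (hsub hs)).continuousAt).sub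
      continuousAt_const).continuousWithinAt
  have hgcont : ContinuousOn g (Set.Icc t₀ t) :=
    ((Real.continuous_exp.comp_continuousOn (hIcont.const_smul (2 * σ * k))).mul hxcont)
  have hanti : AntitoneOn g (Set.Icc t₀ t) := by
    apply antitoneOn_of_deriv_nonpos (convex_Icc _ _) hgcont
    · intro s hs
      rw [interior_Icc] at hs
      exact (hG s hs).differentiableAt.differentiableWithinAt
    · intro s hs
      rw [interior_Icc] at hs
      rw [(hG s hs).deriv]
      have hs' : s ∈ Set.Ico t₀ (t₀ + Tp) := hsub ⟨le_of_lt hs.1, le_of_lt hs.2⟩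
      have hTpos : 0 < Tscale t₀ Tp r s := by
        apply pow_pos
        apply div_pos hTp
        have := hs'.2; linarith
      have hEpos : 0 < Real.exp (2 * σ * k * I s) := Real.exp_pos _
      have hPLs := hPL (x s)
      have h2σ : 2 * σ * (f (x s) - f xstar) ≤ ‖gradient f (x s)‖ ^ 2 := by
        have h2σpos : 0 < 2 * σ := by linarith
        rw [div_mul_eq_mul_div, one_mul, le_div_iff₀ h2σpos] at hPLs
        linarith [hPLs]
      have key : Real.exp (2 * σ * k * I s) * (k * Tscale t₀ Tp r s)
          * (2 * σ * (f (x s) - f xstar) - ‖gradient f (x s)‖ ^ 2) ≤ 0 :=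
        mul_nonpos_of_nonneg_of_nonpos
          (by positivity) (by linarith)
      nlinarith [key]
  -- conclude
  have hgle : g t ≤ g t₀ := hanti (Set.left_mem_Icc.2 ht0) ⟨ht0, le_rfl⟩ ht0
  have hgt0 : g t₀ = f (x t₀) - f xstar := by
    simp [hgdef, hIdef, intervalIntegral.integral_same]
  have hE : (0:ℝ) < Real.exp (2 * σ * k * I t) := Real.exp_pos _
  have : Real.exp (2 * σ * k * I t) * (f (x t) - f xstar) ≤ f (x t₀) - f xstar := by
    rw [← hgt0]; exact hgle
  have hfinal := mul_le_mul_of_nonneg_left this (le_of_lt (Real.exp_pos (-2 * σ * k * I t)))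
  calc f (x t) - f xstar
      = Real.exp (-2 * σ * k * I t) * (Real.exp (2 * σ * k * I t) * (f (x t) - f xstar)) := by
        rw [← mul_assoc, ← Real.exp_add]
        ring_nf
        simp
    _ ≤ Real.exp (-2 * σ * k * I t) * (f (x t₀) - f xstar) := hfinal
end

section
/- Let f : ℝⁿ → ℝ be differentiable, attaining its global minimum value f* = f(x*), and satisfying the Polyak–Łojasiewicz inequality f(y) − f* ≤ (1/(2σ))‖∇f(y)‖² for all y ∈ ℝⁿ, with σ > 0. Let t₀ ∈ ℝ, T_p > 0, r a positive integer, 𝒯(t) = (T_p/(T_p + t₀ − t))^r on [t₀, t₀ + T_p), and k > 0. Suppose x : [t₀, t₀ + T_p) → ℝⁿ is differentiable with ẋ(t) = −k 𝒯(t) ∇f(x(t)). Then f(x(t)) → f* as t → (t₀ + T_p)⁻; i.e., the flow achieves prescribed finite-time convergence of the function value at the user-prescribed time T_p, independently of the initial condition x(t₀). -/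
/-!
Along the flow, `d/dt (f(x t) - f*) = -k 𝒯(t) ‖∇f(x t)‖² ≤ -2σk 𝒯(t) (f(x t) - f*)` by the PŁ
inequality, and `𝒯(t) ≥ T_p / (t₀ + T_p - t)` because `r ≥ 1`. With the integrating factor
`(t₀ + T_p - t)^(-2σkT_p)` this gives
`f(x t) - f* ≤ (f(x t₀) - f*) ((t₀ + T_p - t) / T_p)^(2σkT_p)`, which tends to `0` as
`t → (t₀ + T_p)⁻`.
-/

open Set Filter Topology

theorem HasDerivAt.comp_smul_gradient {E : Type*} [NormedAddCommGroup E] [InnerProductSpace ℝ E]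
    [CompleteSpace E] {f : E → ℝ} {x : ℝ → E} {a t : ℝ} (hf : DifferentiableAt ℝ f (x t))
    (hx : HasDerivAt x (a • gradient f (x t)) t) :
    HasDerivAt (fun s => f (x s)) (a * ‖gradient f (x t)‖ ^ 2) t := by
  refine (hf.hasGradientAt.hasFDerivAt.comp_hasDerivAt t hx).congr_deriv ?_
  rw [InnerProductSpace.toDual_apply_apply, real_inner_smul_right, real_inner_self_eq_norm_sq]

theorem antitoneOn_Ico_of_hasDerivAt_nonpos {g g' : ℝ → ℝ} {a b : ℝ}
    (hg : ∀ t ∈ Ico a b, HasDerivAt g (g' t) t) (hg' : ∀ t ∈ Ico a b, g' t ≤ 0) :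
    AntitoneOn g (Ico a b) := by
  refine antitoneOn_of_hasDerivWithinAt_nonpos (f' := g') (convex_Ico a b)
    (fun t ht => (hg t ht).continuousAt.continuousWithinAt) (fun t ht => ?_) (fun t ht => ?_)
  all_goals rw [interior_Ico] at ht
  · exact (hg t (Ioo_subset_Ico_self ht)).hasDerivWithinAt
  · exact hg' t (Ioo_subset_Ico_self ht)

theorem le_mul_rpow_of_hasDerivAt_le_neg_div_mul {V V' : ℝ → ℝ} {a b c t : ℝ}
    (hV : ∀ s ∈ Ico a b, HasDerivAt V (V' s) s)
    (hV' : ∀ s ∈ Ico a b, V' s ≤ -(c / (b - s)) * V s) (ht : t ∈ Ico a b) :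
    V t ≤ V a * ((b - t) / (b - a)) ^ c := by
  have hpos : ∀ s ∈ Ico a b, 0 < b - s := fun s hs => sub_pos.2 hs.2
  have hw : ∀ s ∈ Ico a b,
      HasDerivAt (fun u => (b - u) ^ (-c)) (c / (b - s) * (b - s) ^ (-c)) s := by
    intro s hs
    refine (((hasDerivAt_id s).const_sub b).rpow_const (Or.inl (hpos s hs).ne')).congr_deriv ?_
    rw [id, Real.rpow_sub_one (hpos s hs).ne']
    ring
  have hanti : AntitoneOn (fun s => V s * (b - s) ^ (-c)) (Ico a b) := by
    refine antitoneOn_Ico_of_hasDerivAt_nonpos (fun s hs => (hV s hs).mul (hw s hs)) fun s hs => ?_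
    have := mul_le_mul_of_nonneg_right (hV' s hs) (Real.rpow_nonneg (hpos s hs).le (-c))
    linarith
  have ha : a ∈ Ico a b := ⟨le_rfl, ht.1.trans_lt ht.2⟩
  have hmono : V t * ((b - t) ^ c)⁻¹ ≤ V a * ((b - a) ^ c)⁻¹ := by
    simpa only [Real.rpow_neg (hpos _ ha).le, Real.rpow_neg (hpos _ ht).le] using hanti ha ht ht.1
  have hbt : 0 < (b - t) ^ c := Real.rpow_pos_of_pos (hpos t ht) c
  calc V t = V t * ((b - t) ^ c)⁻¹ * (b - t) ^ c := by field_simp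
    _ ≤ V a * ((b - a) ^ c)⁻¹ * (b - t) ^ c := mul_le_mul_of_nonneg_right hmono hbt.le
    _ = V a * ((b - t) / (b - a)) ^ c := by
      rw [Real.div_rpow (hpos t ht).le (hpos a ha).le]; ring

theorem neg_mul_norm_gradient_sq_le_of_pl {E : Type*} [NormedAddCommGroup E]
    [InnerProductSpace ℝ E] [CompleteSpace E] {f : E → ℝ} {xstar y : E} {σ k s T : ℝ}
    (hmin : f xstar ≤ f y) (hσ : 0 < σ)
    (hPL : f y - f xstar ≤ 1 / (2 * σ) * ‖gradient f y‖ ^ 2) (hk : 0 ≤ k) (hs : 0 ≤ s)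
    (hsT : s ≤ T) :
    -(k * T) * ‖gradient f y‖ ^ 2 ≤ -(2 * σ * k * s) * (f y - f xstar) := by
  have hgap : 0 ≤ f y - f xstar := sub_nonneg.2 hmin
  have hgrad : 2 * σ * (f y - f xstar) ≤ ‖gradient f y‖ ^ 2 := by
    rwa [one_div_mul_eq_div, le_div_iff₀ (by positivity), mul_comm] at hPL
  calc -(k * T) * ‖gradient f y‖ ^ 2
      ≤ -(k * T) * (2 * σ * (f y - f xstar)) :=
        mul_le_mul_of_nonpos_left hgrad (neg_nonpos.2 (mul_nonneg hk (hs.trans hsT)))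
    _ = -(2 * σ * k * (f y - f xstar)) * T := by ring
    _ ≤ -(2 * σ * k * (f y - f xstar)) * s :=
        mul_le_mul_of_nonpos_left hsT (neg_nonpos.2 (mul_nonneg (by positivity) hgap))
    _ = -(2 * σ * k * s) * (f y - f xstar) := by ring

theorem div_le_Tscale {t₀ Tp t : ℝ} {r : ℕ} (hr : r ≠ 0) (ht : t ∈ Ico t₀ (t₀ + Tp)) :
    Tp / (Tp + t₀ - t) ≤ Tscale t₀ Tp r t :=
  le_self_pow₀ ((one_le_div (by linarith [ht.2])).2 (by linarith [ht.1])) hr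

theorem tendsto_div_sub_rpow_nhdsLT (a b : ℝ) {c : ℝ} (hc : 0 < c) :
    Tendsto (fun t => ((b - t) / (b - a)) ^ c) (𝓝[<] b) (𝓝 0) := by
  have hlin : Tendsto (fun t => (b - t) / (b - a)) (𝓝 b) (𝓝 0) := by
    simpa using ((tendsto_const_nhds (x := b)).sub (tendsto_id (x := 𝓝 b))).div_const (b - a)
  simpa [Function.comp_def, Real.zero_rpow hc.ne'] using
    ((Real.continuousAt_rpow_const 0 c (Or.inr hc.le)).tendsto.comp hlin).mono_left
      nhdsWithin_le_nhds

/-- prescribed finite-time convergence of the function value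
along the time-varying-feedback gradient flow of a PŁ function:
`f(x(t)) → f*` as `t → (t₀ + T_p)⁻`, independently of `x(t₀)`. -/
theorem pl_gradient_flow_prescribed_time_convergence
    (n : ℕ) (f : EuclideanSpace ℝ (Fin n) → ℝ) (hf : Differentiable ℝ f)
    (xstar : EuclideanSpace ℝ (Fin n)) (hmin : ∀ y, f xstar ≤ f y)
    (σ : ℝ) (hσ : 0 < σ)
    (hPL : ∀ y, f y - f xstar ≤ 1 / (2 * σ) * ‖gradient f y‖ ^ 2)
    (t₀ Tp : ℝ) (hTp : 0 < Tp) (r : ℕ) (hr : 0 < r) (k : ℝ) (hk : 0 < k)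
    (x : ℝ → EuclideanSpace ℝ (Fin n))
    (hx : ∀ t ∈ Set.Ico t₀ (t₀ + Tp),
      HasDerivAt x (-(k * Tscale t₀ Tp r t) • gradient f (x t)) t) :
    Filter.Tendsto (fun t => f (x t))
      (nhdsWithin (t₀ + Tp) (Set.Iio (t₀ + Tp))) (nhds (f xstar)) := by
  have hdecay : ∀ t ∈ Ico t₀ (t₀ + Tp), -(k * Tscale t₀ Tp r t) * ‖gradient f (x t)‖ ^ 2 ≤
      -(2 * σ * k * Tp / (t₀ + Tp - t)) * (f (x t) - f xstar) := fun t ht => by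
    convert neg_mul_norm_gradient_sq_le_of_pl (hmin (x t)) hσ (hPL (x t)) hk.le
      (div_nonneg hTp.le (by linarith [ht.2])) (div_le_Tscale hr.ne' ht) using 3
    ring
  have hbound := fun t (ht : t ∈ Ico t₀ (t₀ + Tp)) =>
    le_mul_rpow_of_hasDerivAt_le_neg_div_mul (V := fun s => f (x s) - f xstar)
      (fun s hs => ((hx s hs).comp_smul_gradient (hf _)).sub_const _) hdecay ht
  have hupper : Tendsto (fun t => f xstar + (f (x t₀) - f xstar) *
      ((t₀ + Tp - t) / (t₀ + Tp - t₀)) ^ (2 * σ * k * Tp)) (𝓝[<] (t₀ + Tp)) (𝓝 (f xstar)) := by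
    simpa using ((tendsto_div_sub_rpow_nhdsLT t₀ (t₀ + Tp) (by positivity)).const_mul
      (f (x t₀) - f xstar)).const_add (f xstar)
  refine tendsto_of_tendsto_of_tendsto_of_le_of_le' tendsto_const_nhds hupper
    (Eventually.of_forall fun t => hmin (x t)) ?_
  filter_upwards [Ioo_mem_nhdsLT (by linarith : t₀ < t₀ + Tp)] with t ht
  linarith [hbound t (Ioo_subset_Ico_self ht)]
end

section
/- Let f : ℝⁿ → ℝ be differentiable and μ-strongly convex with μ > 0, i.e., ⟨∇f(χ₁) − ∇f(χ₂), χ₁ − χ₂⟩ ≥ μ‖χ₁ − χ₂‖² for all χ₁, χ₂ ∈ ℝⁿ, and let x* ∈ ℝⁿ satisfy ∇f(x*) = 0. Let t₀ ∈ ℝ, T_p > 0, r a positive integer, 𝒯(t) = (T_p/(T_p + t₀ − t))^r on [t₀, t₀ + T_p), and k > 0. Suppose x : [t₀, t₀ + T_p) → ℝⁿ is differentiable with ẋ(t) = −k 𝒯(t) ∇f(x(t)). Then V(t) = ‖x(t) − x*‖² is differentiable and satisfies V′(t) ≤ −2kμ 𝒯(t) V(t) for all t ∈ [t₀, t₀ +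 T_p). -/
open RealInnerProductSpace

/-- along the time-varying-feedback gradient flow
`ẋ = -k𝒯(t)∇f(x)` of a `μ`-strongly convex function, the Lyapunov function
`V(t) = ‖x(t) - x*‖²` satisfies `V'(t) ≤ -2kμ𝒯(t)V(t)`. -/
theorem strongly_convex_gradient_flow_lyapunov_inequality
    (n : ℕ) (f : EuclideanSpace ℝ (Fin n) → ℝ) (hf : Differentiable ℝ f)
    (μ : ℝ) (hμ : 0 < μ)
    (hSC : ∀ χ₁ χ₂ : EuclideanSpace ℝ (Fin n),
      μ * ‖χ₁ - χ₂‖ ^ 2 ≤ ⟪gradient f χ₁ - gradient f χ₂, χ₁ - χ₂⟫)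
    (xstar : EuclideanSpace ℝ (Fin n)) (hstar : gradient f xstar = 0)
    (t₀ Tp : ℝ) (hTp : 0 < Tp) (r : ℕ) (hr : 0 < r) (k : ℝ) (hk : 0 < k)
    (x : ℝ → EuclideanSpace ℝ (Fin n))
    (hx : ∀ t ∈ Set.Ico t₀ (t₀ + Tp),
      HasDerivAt x (-(k * Tscale t₀ Tp r t) • gradient f (x t)) t) :
    ∀ t ∈ Set.Ico t₀ (t₀ + Tp),
      DifferentiableAt ℝ (fun s => ‖x s - xstar‖ ^ 2) t ∧
      deriv (fun s => ‖x s - xstar‖ ^ 2) t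
        ≤ -2 * k * μ * Tscale t₀ Tp r t * ‖x t - xstar‖ ^ 2 := by
  intro t ht
  obtain ⟨ht1, ht2⟩ := ht
  have hpos : 0 < Tp + t₀ - t := by linarith
  have h𝒯 : 0 < Tscale t₀ Tp r t := pow_pos (div_pos hTp hpos) r
  set c : ℝ := -(k * Tscale t₀ Tp r t) with hc
  have hg : HasDerivAt (fun s => x s - xstar) (c • gradient f (x t)) t :=
    (hx t ⟨ht1, ht2⟩).sub_const xstar
  have hinner : HasDerivAt (fun s => ⟪x s - xstar, x s - xstar⟫)
      (⟪x t - xstar, c • gradient f (x t)⟫ + ⟪c • gradient f (x t), x t - xstar⟫) t :=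
    hg.inner ℝ hg
  have hV : HasDerivAt (fun s => ‖x s - xstar‖ ^ 2)
      (2 * c * ⟪gradient f (x t), x t - xstar⟫) t := by
    have heq : (fun s => ‖x s - xstar‖ ^ 2) = fun s => ⟪x s - xstar, x s - xstar⟫ := by
      funext s
      rw [real_inner_self_eq_norm_sq]
    rw [heq]
    convert hinner using 1
    rw [real_inner_smul_left, real_inner_smul_right, real_inner_comm]
    ring
  refine ⟨hV.differentiableAt, ?_⟩
  rw [hV.deriv]
  have hkey : μ * ‖x t - xstar‖ ^ 2 ≤ ⟪gradient f (x t), x t - xstar⟫ := by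
    have := hSC (x t) xstar
    rwa [hstar, sub_zero] at this
  have hc0 : 0 < k * Tscale t₀ Tp r t := mul_pos hk h𝒯
  rw [hc]
  nlinarith [hc0, hkey]
end

section
/- Let f : ℝⁿ → ℝ be differentiable and μ-strongly convex with μ > 0, i.e., ⟨∇f(χ₁) − ∇f(χ₂), χ₁ − χ₂⟩ ≥ μ‖χ₁ − χ₂‖² for all χ₁, χ₂ ∈ ℝⁿ, and let x* ∈ ℝⁿ satisfy ∇f(x*) = 0. Let t₀ ∈ ℝ, T_p > 0, r a positive integer, 𝒯(t) = (T_p/(T_p + t₀ − t))^r on [t₀, t₀ + T_p), and k > 0. Suppose x : [t₀, t₀ + T_p) → ℝⁿ is differentiable with ẋ(t) = −k 𝒯(t) ∇f(x(t)). Then x(t) → x* as t → (t₀ + T_p)⁻; i.e., the flow converges to the minimizer at the user-prescribed time T_p, independently of the initial condition x(t₀). -/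
open RealInnerProductSpace

/-- prescribed finite-time convergence of the time-varying
feedback gradient flow of a `μ`-strongly convex function:
`x(t) → x*` as `t → (t₀ + T_p)⁻`, independently of `x(t₀)`. -/
theorem strongly_convex_gradient_flow_prescribed_time_convergence
    (n : ℕ) (f : EuclideanSpace ℝ (Fin n) → ℝ) (hf : Differentiable ℝ f)
    (μ : ℝ) (hμ : 0 < μ)
    (hSC : ∀ χ₁ χ₂ : EuclideanSpace ℝ (Fin n),
      μ * ‖χ₁ - χ₂‖ ^ 2 ≤ ⟪gradient f χ₁ - gradient f χ₂, χ₁ - χ₂⟫)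
    (xstar : EuclideanSpace ℝ (Fin n)) (hstar : gradient f xstar = 0)
    (t₀ Tp : ℝ) (hTp : 0 < Tp) (r : ℕ) (hr : 0 < r) (k : ℝ) (hk : 0 < k)
    (x : ℝ → EuclideanSpace ℝ (Fin n))
    (hx : ∀ t ∈ Set.Ico t₀ (t₀ + Tp),
      HasDerivAt x (-(k * Tscale t₀ Tp r t) • gradient f (x t)) t) :
    Filter.Tendsto x (nhdsWithin (t₀ + Tp) (Set.Iio (t₀ + Tp))) (nhds xstar) := by
  set b : ℝ := t₀ + Tp with hbdef
  set V : ℝ → ℝ := fun t => ‖x t - xstar‖ ^ 2 with hVdef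
  set ψ : ℝ → ℝ := fun t => Tp * (Real.log Tp - Real.log (Tp + t₀ - t)) with hψdef
  set c : ℝ := 2 * k * μ with hcdef
  have hc0 : 0 < c := by positivity
  set g : ℝ → ℝ := fun t => Real.exp (c * ψ t) * V t with hgdef
  have ht₀b : t₀ < b := by simp [hbdef]; linarith
  -- derivative facts on the interval
  have hgderiv : ∀ t ∈ Set.Ico t₀ b,
      HasDerivAt g (Real.exp (c * ψ t) *
        (c * (Tp / (Tp + t₀ - t)) * V t
          + 2 * ⟪(-(k * Tscale t₀ Tp r t) • gradient f (x t)), x t - xstar⟫)) t ∧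
      Real.exp (c * ψ t) *
        (c * (Tp / (Tp + t₀ - t)) * V t
          + 2 * ⟪(-(k * Tscale t₀ Tp r t) • gradient f (x t)), x t - xstar⟫) ≤ 0 := by
    intro t ht
    have hu : 0 < Tp + t₀ - t := by
      have := ht.2; simp only [hbdef] at this; linarith
    have huT : Tp + t₀ - t ≤ Tp := by have := ht.1; linarith
    -- derivative of ψ
    have hu' : HasDerivAt (fun s : ℝ => Tp + t₀ - s) (-1) t := by
      simpa using (hasDerivAt_id t).const_sub (Tp + t₀)
    have hlog : HasDerivAt (fun s : ℝ => Real.log (Tp + t₀ - s)) (-1 / (Tp + t₀ - t)) t :=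
      hu'.log hu.ne'
    have hψd : HasDerivAt ψ (Tp / (Tp + t₀ - t)) t := by
      have h := ((hasDerivAt_const t (Real.log Tp)).sub hlog).const_mul Tp
      have : Tp * (0 - -1 / (Tp + t₀ - t)) = Tp / (Tp + t₀ - t) := by ring
      rw [this] at h
      exact h
    -- derivative of V
    set x' : EuclideanSpace ℝ (Fin n) := -(k * Tscale t₀ Tp r t) • gradient f (x t) with hx'def
    have hxt : HasDerivAt (fun s => x s - xstar) x' t := (hx t ht).sub_const xstar
    have hVd : HasDerivAt V (2 * ⟪x', x t - xstar⟫) t := by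
      have h := HasDerivAt.inner ℝ hxt hxt
      have heq : (fun s => ⟪x s - xstar, x s - xstar⟫) = V := by
        funext s
        exact real_inner_self_eq_norm_sq _
      rw [heq] at h
      have : ⟪x t - xstar, x'⟫ + ⟪x', x t - xstar⟫ = 2 * ⟪x', x t - xstar⟫ := by
        rw [real_inner_comm (x t - xstar) x']; ring
      rwa [this] at h
    -- derivative of g
    have hgd : HasDerivAt g (Real.exp (c * ψ t) *
        (c * (Tp / (Tp + t₀ - t)) * V t + 2 * ⟪x', x t - xstar⟫)) t := by
      have hexp : HasDerivAt (fun s => Real.exp (c * ψ s))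
          (c * (Tp / (Tp + t₀ - t)) * Real.exp (c * ψ t)) t := by
        have h := (hψd.const_mul c).exp
        have : Real.exp (c * ψ t) * (c * (Tp / (Tp + t₀ - t)))
            = c * (Tp / (Tp + t₀ - t)) * Real.exp (c * ψ t) := by ring
        rwa [this] at h
      have h := hexp.mul hVd
      have : c * (Tp / (Tp + t₀ - t)) * Real.exp (c * ψ t) * V t
          + Real.exp (c * ψ t) * (2 * ⟪x', x t - xstar⟫)
          = Real.exp (c * ψ t) *
            (c * (Tp / (Tp + t₀ - t)) * V t + 2 * ⟪x', x t - xstar⟫) := by ring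
      rwa [this] at h
    refine ⟨hgd, ?_⟩
    -- nonpositivity of the derivative
    have hT1 : (1 : ℝ) ≤ Tp / (Tp + t₀ - t) := (one_le_div hu).mpr huT
    have hT0 : 0 ≤ Tp / (Tp + t₀ - t) := by linarith
    have hTle : Tp / (Tp + t₀ - t) ≤ Tscale t₀ Tp r t := by
      simpa [Tscale] using le_self_pow₀ hT1 hr.ne'
    have hTs0 : 0 ≤ Tscale t₀ Tp r t := by
      simp only [Tscale]; positivity
    have hV0 : 0 ≤ V t := by positivity
    have hinner : μ * V t ≤ ⟪gradient f (x t), x t - xstar⟫ := by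
      have h := hSC (x t) xstar
      rwa [hstar, sub_zero] at h
    have hip : ⟪x', x t - xstar⟫ = -(k * Tscale t₀ Tp r t) * ⟪gradient f (x t), x t - xstar⟫ := by
      rw [hx'def, real_inner_smul_left]
    have hkey : c * (Tp / (Tp + t₀ - t)) * V t + 2 * ⟪x', x t - xstar⟫ ≤ 0 := by
      rw [hip]
      have h1 : c * (Tp / (Tp + t₀ - t)) * V t ≤ c * Tscale t₀ Tp r t * V t := by
        have := mul_le_mul_of_nonneg_right (mul_le_mul_of_nonneg_left hTle hc0.le) hV0
        linarith
      have h2 : k * Tscale t₀ Tp r t * (μ * V t)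
          ≤ k * Tscale t₀ Tp r t * ⟪gradient f (x t), x t - xstar⟫ :=
        mul_le_mul_of_nonneg_left hinner (by positivity)
      have h3 : c * Tscale t₀ Tp r t * V t
          = 2 * (k * Tscale t₀ Tp r t * (μ * V t)) := by rw [hcdef]; ring
      linarith [h1, h2, h3]
    exact mul_nonpos_of_nonneg_of_nonpos (Real.exp_pos _).le hkey
  -- g is antitone on the interval
  have hanti : AntitoneOn g (Set.Ico t₀ b) := by
    apply antitoneOn_of_deriv_nonpos (convex_Ico t₀ b)
    · intro t ht
      exact ((hgderiv t ht).1).continuousAt.continuousWithinAt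
    · rw [interior_Ico]
      intro t ht
      exact ((hgderiv t (Set.Ioo_subset_Ico_self ht)).1).differentiableAt.differentiableWithinAt
    · rw [interior_Ico]
      intro t ht
      have h := hgderiv t (Set.Ioo_subset_Ico_self ht)
      rw [h.1.deriv]
      exact h.2
  -- the bound V t ≤ exp (-(c * ψ t)) * g t₀
  have hbound : ∀ t ∈ Set.Ico t₀ b, V t ≤ Real.exp (-(c * ψ t)) * g t₀ := by
    intro t ht
    have hgt : g t ≤ g t₀ := hanti (Set.mem_Ico.mpr ⟨le_refl t₀, ht₀b⟩) ht ht.1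
    have hexp : 0 < Real.exp (-(c * ψ t)) := Real.exp_pos _
    have : V t = Real.exp (-(c * ψ t)) * g t := by
      simp only [hgdef]
      rw [← mul_assoc, ← Real.exp_add]
      simp
    rw [this]
    exact mul_le_mul_of_nonneg_left hgt hexp.le
  -- the bound tends to 0
  set l := nhdsWithin b (Set.Iio b) with hldef
  have hul : Filter.Tendsto (fun t => Tp + t₀ - t) l (nhdsWithin 0 (Set.Ioi 0)) := by
    rw [tendsto_nhdsWithin_iff]
    constructor
    · have hcont : Filter.Tendsto (fun t : ℝ => Tp + t₀ - t) (nhds b) (nhds (Tp + t₀ - b)) :=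
        (continuous_const.sub continuous_id).tendsto b
      have : Tp + t₀ - b = 0 := by simp [hbdef]; ring
      rw [this] at hcont
      exact hcont.mono_left nhdsWithin_le_nhds
    · filter_upwards [self_mem_nhdsWithin] with t ht
      simp only [Set.mem_Iio] at ht
      simp only [Set.mem_Ioi]
      simp only [hbdef] at ht
      linarith
  have hψtop : Filter.Tendsto ψ l Filter.atTop := by
    have hlog : Filter.Tendsto (fun t => Real.log (Tp + t₀ - t)) l Filter.atBot :=
      Real.tendsto_log_nhdsGT_zero.comp hul
    have hneglog : Filter.Tendsto (fun t => -Real.log (Tp + t₀ - t)) l Filter.atTop :=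
      Filter.tendsto_neg_atBot_atTop.comp hlog
    have hneg : Filter.Tendsto (fun t => Real.log Tp - Real.log (Tp + t₀ - t)) l Filter.atTop := by
      simp only [sub_eq_add_neg]
      exact Filter.tendsto_atTop_add_const_left _ (Real.log Tp) hneglog
    exact hneg.const_mul_atTop hTp
  have hexp0 : Filter.Tendsto (fun t => Real.exp (-(c * ψ t)) * g t₀) l (nhds 0) := by
    have h1 : Filter.Tendsto (fun t => -(c * ψ t)) l Filter.atBot := by
      exact Filter.tendsto_neg_atTop_atBot.comp (hψtop.const_mul_atTop hc0)
    have h2 : Filter.Tendsto (fun t => Real.exp (-(c * ψ t))) l (nhds 0) :=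
      Real.tendsto_exp_atBot.comp h1
    simpa using h2.mul_const (g t₀)
  -- squeeze
  have hIoo : Set.Ioo t₀ b ∈ l := Ioo_mem_nhdsLT_of_mem ⟨ht₀b, le_refl b⟩
  have hV0 : Filter.Tendsto V l (nhds 0) := by
    apply squeeze_zero' (Filter.Eventually.of_forall fun t => by positivity)
      ?_ hexp0
    filter_upwards [hIoo] with t ht
    exact hbound t (Set.Ioo_subset_Ico_self ht)
  have hnorm : Filter.Tendsto (fun t => ‖x t - xstar‖) l (nhds 0) := by
    have heq : (fun t => ‖x t - xstar‖) = (fun s => Real.sqrt s) ∘ V := by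
      funext t
      exact (Real.sqrt_sq (norm_nonneg _)).symm
    rw [heq]
    simpa using (Real.continuous_sqrt.tendsto 0).comp hV0
  rw [tendsto_iff_norm_sub_tendsto_zero]
  exact hnorm
end

section
/- Let f : ℝⁿ → ℝ be differentiable, attaining its global minimum value f* = f(x*), and satisfying the Polyak–Łojasiewicz inequality f(y) − f* ≤ (1/(2σ))‖∇f(y)‖² for all y ∈ ℝⁿ, with σ > 0. Let t₀ ∈ ℝ, T_p > 0, take r = 1 so that 𝒯(t) = T_p/(T_p + t₀ − t) on [t₀, t₀ + T_p), and let k > 0. Suppose x : [t₀, t₀ + T_p) → ℝⁿ is differentiable with ẋ(t) = −k 𝒯(t) ∇f(x(t)). Then for every t ∈ [t₀, t₀ + T_p), f(x(t)) − f* ≤ (1 − (t − t₀)/T_p)^{2σ k T_p} · (f(x(t₀)) − f*). -/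
/-!
Along the flow, `V(t) = f(x(t)) - f*` satisfies `V' = -k 𝒯 ‖∇f(x)‖² ≤ -2σk 𝒯 V` by the PŁ
inequality. Since `h(t) = 1 - (t - t₀)/T_p` has `h' = -1/T_p = -h 𝒯 / T_p`, the weight
`ρ = h ^ (2σkT_p)` solves `ρ' = -2σk 𝒯 ρ` exactly, so `V / ρ` is nonincreasing and `ρ(t₀) = 1`.
-/

open Set

theorem HasGradientAt.hasDerivAt_comp_of_hasDerivAt_smul {F : Type*} [NormedAddCommGroup F]
    [InnerProductSpace ℝ F] [CompleteSpace F] {f : F → ℝ} {f' : F} {x : ℝ → F} {a t : ℝ}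
    (hf : HasGradientAt f f' (x t)) (hx : HasDerivAt x (a • f') t) :
    HasDerivAt (fun s => f (x s)) (a * ‖f'‖ ^ 2) t := by
  have := hf.hasFDerivAt.comp_hasDerivAt t hx
  rwa [InnerProductSpace.toDual_apply_apply, real_inner_smul_right,
    real_inner_self_eq_norm_sq] at this

theorem antitoneOn_div_of_deriv_le_neg_mul {D : Set ℝ} (hD : Convex ℝ D) {V V' ρ a : ℝ → ℝ}
    (hV : ∀ t ∈ D, HasDerivAt V (V' t) t) (hρ : ∀ t ∈ D, HasDerivAt ρ (-a t * ρ t) t)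
    (hρ_pos : ∀ t ∈ D, 0 < ρ t) (hle : ∀ t ∈ D, V' t ≤ -a t * V t) :
    AntitoneOn (fun t => V t / ρ t) D := by
  have hderiv : ∀ t ∈ D,
      HasDerivAt (fun t => V t / ρ t) ((V' t * ρ t - V t * (-a t * ρ t)) / ρ t ^ 2) t :=
    fun t ht => (hV t ht).div (hρ t ht) (hρ_pos t ht).ne'
  refine antitoneOn_of_hasDerivWithinAt_nonpos hD
    (fun t ht => (hderiv t ht).continuousAt.continuousWithinAt)
    (fun t ht => (hderiv t (interior_subset ht)).hasDerivWithinAt) fun t ht => ?_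
  have ht := interior_subset ht
  have hnum : V' t * ρ t ≤ V t * (-a t * ρ t) := by
    nlinarith [mul_le_mul_of_nonneg_right (hle t ht) (hρ_pos t ht).le]
  exact div_nonpos_of_nonpos_of_nonneg (sub_nonpos.2 hnum) (sq_nonneg _)

theorem hasDerivAt_one_sub_div_rpow_mul {t₀ Tp a s : ℝ} (hTp : Tp ≠ 0)
    (hs : 0 < 1 - (s - t₀) / Tp) :
    HasDerivAt (fun s => (1 - (s - t₀) / Tp) ^ (a * Tp))
      (-(a * (Tp / (Tp + t₀ - s))) * (1 - (s - t₀) / Tp) ^ (a * Tp)) s := by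
  have hlin : HasDerivAt (fun s => 1 - (s - t₀) / Tp) (-(1 / Tp)) s := by
    simpa using (((hasDerivAt_id s).sub_const t₀).div_const Tp).const_sub 1
  convert hlin.rpow_const (p := a * Tp) (Or.inl hs.ne') using 1
  rw [Real.rpow_sub_one hs.ne']
  have : Tp + t₀ - s = Tp * (1 - (s - t₀) / Tp) := by field_simp; ring
  rw [this]
  field_simp

theorem pl_gradient_flow_polynomial_rate_r_one_general
    (n : ℕ) (f : EuclideanSpace ℝ (Fin n) → ℝ) (hf : Differentiable ℝ f)
    (xstar : EuclideanSpace ℝ (Fin n))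
    (σ : ℝ) (hσ : 0 < σ)
    (hPL : ∀ y, f y - f xstar ≤ 1 / (2 * σ) * ‖gradient f y‖ ^ 2)
    (t₀ Tp : ℝ) (hTp : 0 < Tp) (k : ℝ) (hk : 0 < k)
    (x : ℝ → EuclideanSpace ℝ (Fin n))
    (hx : ∀ t ∈ Set.Ico t₀ (t₀ + Tp),
      HasDerivAt x (-(k * (Tp / (Tp + t₀ - t))) • gradient f (x t)) t) :
    ∀ t ∈ Set.Ico t₀ (t₀ + Tp),
      f (x t) - f xstar
        ≤ (1 - (t - t₀) / Tp) ^ (2 * σ * k * Tp) * (f (x t₀) - f xstar) := by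
  have h_pos : ∀ s ∈ Ico t₀ (t₀ + Tp), 0 < 1 - (s - t₀) / Tp := fun s hs => by
    linarith [(div_lt_one hTp).2 (by linarith [hs.2] : s - t₀ < Tp)]
  have hPL_mul : ∀ y, 2 * σ * (f y - f xstar) ≤ ‖gradient f y‖ ^ 2 := fun y => by
    have := hPL y
    rwa [div_mul_eq_mul_div, one_mul, le_div_iff₀ (by positivity), mul_comm] at this
  have hanti := antitoneOn_div_of_deriv_le_neg_mul (convex_Ico t₀ (t₀ + Tp))
    (V := fun s => f (x s) - f xstar) (a := fun s => 2 * σ * k * (Tp / (Tp + t₀ - s)))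
    (fun s hs => ((hf _).hasGradientAt.hasDerivAt_comp_of_hasDerivAt_smul (hx s hs)).sub_const _)
    (fun s hs => hasDerivAt_one_sub_div_rpow_mul hTp.ne' (h_pos s hs))
    (fun s hs => Real.rpow_pos_of_pos (h_pos s hs) _) fun s hs => by
      have hscale : 0 ≤ k * (Tp / (Tp + t₀ - s)) := by
        have : 0 < Tp + t₀ - s := by linarith [hs.2]
        positivity
      nlinarith [mul_le_mul_of_nonneg_left (hPL_mul (x s)) hscale]
  intro t ht
  have hmono := hanti (left_mem_Ico.2 (by linarith)) ht ht.1
  simp only [sub_self, zero_div, sub_zero, Real.one_rpow, div_one] at hmono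
  rwa [div_le_iff₀ (Real.rpow_pos_of_pos (h_pos t ht) _), mul_comm] at hmono

/-- explicit polynomial convergence rate for the time-varying
feedback gradient flow of a PŁ function with `r = 1`, i.e.
`𝒯(t) = T_p/(T_p + t₀ - t)`:
`f(x(t)) - f* ≤ (1 - (t - t₀)/T_p)^{2σkT_p} (f(x(t₀)) - f*)`. -/
theorem pl_gradient_flow_polynomial_rate_r_one
    (n : ℕ) (f : EuclideanSpace ℝ (Fin n) → ℝ) (hf : Differentiable ℝ f)
    (xstar : EuclideanSpace ℝ (Fin n)) (hmin : ∀ y, f xstar ≤ f y)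
    (σ : ℝ) (hσ : 0 < σ)
    (hPL : ∀ y, f y - f xstar ≤ 1 / (2 * σ) * ‖gradient f y‖ ^ 2)
    (t₀ Tp : ℝ) (hTp : 0 < Tp) (k : ℝ) (hk : 0 < k)
    (x : ℝ → EuclideanSpace ℝ (Fin n))
    (hx : ∀ t ∈ Set.Ico t₀ (t₀ + Tp),
      HasDerivAt x (-(k * (Tp / (Tp + t₀ - t))) • gradient f (x t)) t) :
    ∀ t ∈ Set.Ico t₀ (t₀ + Tp),
      f (x t) - f xstar
        ≤ (1 - (t - t₀) / Tp) ^ (2 * σ * k * Tp) * (f (x t₀) - f xstar) :=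
  pl_gradient_flow_polynomial_rate_r_one_general n f hf xstar σ hσ hPL t₀ Tp hTp k hk x hx
end
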